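/- The quotient (E'(ℂ) ∖ E'[2]) / inv (with the quotient topology) is homeomorphic to ℂ ∖ {0, i, −i}, the complex plane with the three points 0, i, −i removed; a homeomorphism is induced by the x-coordinate map [x : y : z] ↦ x/z. -/

import Mathlib

open scoped LinearAlgebra.Projectivization
open Projectivization Complex

noncomputable section

/-- Complex projective plane `ℙ²(ℂ)` with the Euclidean (quotient) topology. -/
instance : TopologicalSpace (ℙ ℂ (Fin 3 → ℂ)) :=
  inferInstanceAs (TopologicalSpace (Quotient (projectivizationSetoid ℂ (Fin 3 → ℂ))))

lemma ne010 : (![0, 1, 0] : Fin 3 → ℂ) ≠ 0 := fun h => by simpa using congrFun h 1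
lemma ne001 : (![0, 0, 1] : Fin 3 → ℂ) ≠ 0 := fun h => by simpa using congrFun h 2
lemma neI01 : (![I, 0, 1] : Fin 3 → ℂ) ≠ 0 := fun h => by simpa using congrFun h 2
lemma nemI01 : (![-I, 0, 1] : Fin 3 → ℂ) ≠ 0 := fun h => by simpa using congrFun h 2

/-- The linear map `(x,y,z) ↦ (x,−y,z)` on `ℂ³`. -/
def negYlin : (Fin 3 → ℂ) →ₗ[ℂ] (Fin 3 → ℂ) where
  toFun v := fun i => if i = 1 then -v i else v i
  map_add' v w := by
    funext i
    by_cases h : i = 1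
    · simp [h, neg_add, add_comm]
    · simp [h]
  map_smul' c v := by funext i; by_cases h : i = 1 <;> simp [h]

lemma negYlin_comp : negYlin.comp negYlin = LinearMap.id := by
  ext v i
  by_cases h : i = 1 <;> simp [negYlin, h]

lemma negYlin_inj : Function.Injective negYlin := fun v w h => by
  have := congrArg negYlin h
  simpa [← LinearMap.comp_apply, negYlin_comp] using this

/-- The involution `inv : [x:y:z] ↦ [x:−y:z]` (negation on the curves) on `ℙ²(ℂ)`. -/
def invP : ℙ ℂ (Fin 3 → ℂ) → ℙ ℂ (Fin 3 → ℂ) := Projectivization.map negYlin negYlin_inj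

lemma negYlin_negYlin (v : Fin 3 → ℂ) : negYlin (negYlin v) = v := by
  funext i; by_cases h : i = 1 <;> simp [negYlin, h]

lemma invP_invol (p : ℙ ℂ (Fin 3 → ℂ)) : invP (invP p) = p := by
  induction p using Projectivization.ind with
  | h v hv =>
    simp only [invP, Projectivization.map_mk]
    exact (Projectivization.mk_eq_mk_iff' ℂ _ _ _ _).2 ⟨1, by simp [negYlin_negYlin]⟩

/-- `E'(ℂ)`: the complex points of `y²z = x³ + xz²` in `ℙ²(ℂ)`
(homogeneous coordinates `x, y, z` are `v 0, v 1, v 2`). -/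
def E'curve : Set (ℙ ℂ (Fin 3 → ℂ)) :=
  {p | ∃ (v : Fin 3 → ℂ) (hv : v ≠ 0), Projectivization.mk ℂ v hv = p ∧
    (v 1) ^ 2 * v 2 = (v 0) ^ 3 + v 0 * (v 2) ^ 2}

/-- The 2-torsion points `E'[2] = {[0:1:0], [0:0:1], [i:0:1], [−i:0:1]}` of `E'`. -/
def E'two : Set (ℙ ℂ (Fin 3 → ℂ)) :=
  {Projectivization.mk ℂ ![0, 1, 0] ne010, Projectivization.mk ℂ ![0, 0, 1] ne001,
   Projectivization.mk ℂ ![I, 0, 1] neI01, Projectivization.mk ℂ ![-I, 0, 1] nemI01}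

/-- The subspace `E'(ℂ) ∖ E'[2]` of `ℙ²(ℂ)`. -/
abbrev E'openSub : Type := {p : ℙ ℂ (Fin 3 → ℂ) // p ∈ E'curve ∧ p ∉ E'two}

/-- Identification of `Q` with `−Q` on `E'(ℂ) ∖ E'[2]`. -/
def baseSetoid : Setoid E'openSub where
  r a b := b.1 = a.1 ∨ b.1 = invP a.1
  iseqv := by
    constructor
    · exact fun a => Or.inl rfl
    · rintro a b (h | h)
      · exact Or.inl h.symm
      · exact Or.inr (by rw [h, invP_invol])
    · rintro a b c (hb | hb) (hc | hc)
      · exact Or.inl (hc.trans hb)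
      · exact Or.inr (by rw [hc, hb])
      · exact Or.inr (by rw [hc, hb])
      · exact Or.inl (by rw [hc, hb, invP_invol])

/-- `(E'(ℂ) ∖ E'[2]) / inv`, with the quotient topology. -/
abbrev E'base : Type := Quotient baseSetoid


/-! ### Auxiliary definitions and lemmas -/

abbrev P2 : Type := ℙ ℂ (Fin 3 → ℂ)
abbrev NZ : Type := {v : Fin 3 → ℂ // v ≠ 0}

def pr (v : NZ) : P2 := Projectivization.mk ℂ v.1 v.2

lemma continuous_pr : Continuous pr := continuous_quotient_mk'

lemma ne_xy1 (x y : ℂ) : (![x, y, 1] : Fin 3 → ℂ) ≠ 0 := fun h => by simpa using congrFun h 2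

lemma eq_of_mem {v : Fin 3 → ℂ} (hv : v ≠ 0) (hc : Projectivization.mk ℂ v hv ∈ E'curve) :
    (v 1) ^ 2 * v 2 = (v 0) ^ 3 + v 0 * (v 2) ^ 2 := by
  obtain ⟨w, hw, hmk, heq⟩ := hc
  obtain ⟨a, ha⟩ := (Projectivization.mk_eq_mk_iff ℂ w v hw hv).1 hmk
  have h0 : w 0 = (a : ℂ) * v 0 := by rw [← ha]; simp [Units.smul_def]
  have h1 : w 1 = (a : ℂ) * v 1 := by rw [← ha]; simp [Units.smul_def]
  have h2 : w 2 = (a : ℂ) * v 2 := by rw [← ha]; simp [Units.smul_def]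
  have ha3 : (a : ℂ) ^ 3 ≠ 0 := pow_ne_zero _ a.ne_zero
  apply mul_left_cancel₀ ha3
  rw [h0, h1, h2] at heq
  linear_combination heq

lemma rep_spec {v : Fin 3 → ℂ} (hv : v ≠ 0)
    (hc : Projectivization.mk ℂ v hv ∈ E'curve) (ht : Projectivization.mk ℂ v hv ∉ E'two) :
    v 2 ≠ 0 ∧ v 1 ≠ 0 := by
  have key := eq_of_mem hv hc
  simp only [E'two, Set.mem_insert_iff, Set.mem_singleton_iff, not_or] at ht
  obtain ⟨t1, t2, t3, t4⟩ := ht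
  have h2 : v 2 ≠ 0 := by
    intro h2
    have h0 : v 0 = 0 := by
      have h3 : v 0 ^ 3 = 0 := by rw [h2] at key; linear_combination -key
      exact pow_eq_zero_iff (by norm_num) |>.1 h3
    exact t1 ((Projectivization.mk_eq_mk_iff' ℂ _ _ hv ne010).2
      ⟨v 1, funext fun i => by fin_cases i <;> simp [h0, h2]⟩)
  refine ⟨h2, ?_⟩
  intro h1
  have hfac : v 0 * ((v 0 - I * v 2) * (v 0 + I * v 2)) = 0 := by
    rw [h1] at key
    linear_combination -key - (v 0 * v 2 ^ 2) * Complex.I_sq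
  rcases mul_eq_zero.1 hfac with h0 | hf
  · exact t2 ((Projectivization.mk_eq_mk_iff' ℂ _ _ hv ne001).2
      ⟨v 2, funext fun i => by fin_cases i <;> simp [h0, h1]⟩)
  rcases mul_eq_zero.1 hf with hI | hmI
  · have h0 : v 0 = I * v 2 := sub_eq_zero.1 hI
    exact t3 ((Projectivization.mk_eq_mk_iff' ℂ _ _ hv neI01).2
      ⟨v 2, funext fun i => by fin_cases i <;> simp [h0, h1, mul_comm]⟩)
  · have h0 : v 0 = -(I * v 2) := eq_neg_of_add_eq_zero_left hmI
    exact t4 ((Projectivization.mk_eq_mk_iff' ℂ _ _ hv nemI01).2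
      ⟨v 2, funext fun i => by fin_cases i <;> simp [h0, h1, mul_comm]⟩)

lemma x_spec {v : Fin 3 → ℂ} (hv : v ≠ 0)
    (hc : Projectivization.mk ℂ v hv ∈ E'curve) (ht : Projectivization.mk ℂ v hv ∉ E'two) :
    v 0 / v 2 ≠ 0 ∧ v 0 / v 2 ≠ I ∧ v 0 / v 2 ≠ -I := by
  obtain ⟨h2, h1⟩ := rep_spec hv hc ht
  have key := eq_of_mem hv hc
  have hy : ∀ w : ℂ, v 1 ^ 2 * v 2 = 0 → False := fun w hw => by
    have : v 1 ^ 2 = 0 := by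
      rcases mul_eq_zero.1 hw with h | h
      · exact h
      · exact absurd h h2
    exact h1 (pow_eq_zero_iff (by norm_num) |>.1 this)
  refine ⟨?_, ?_, ?_⟩
  · intro h
    have h0 : v 0 = 0 := by
      rcases div_eq_zero_iff.1 h with h | h
      · exact h
      · exact absurd h h2
    refine hy 0 ?_
    rw [h0] at key; linear_combination key
  · intro h
    have h0 : v 0 = I * v 2 := by
      field_simp at h; exact h.trans (mul_comm _ _)
    refine hy 0 ?_
    rw [h0] at key
    linear_combination key + Complex.I * v 2 ^ 3 * Complex.I_sq
  · intro h
    have h0 : v 0 = -I * v 2 := by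
      rw [div_eq_iff h2] at h; exact h
    refine hy 0 ?_
    rw [h0] at key
    linear_combination key - Complex.I * v 2 ^ 3 * Complex.I_sq

lemma y_eq {v : Fin 3 → ℂ} (key : (v 1) ^ 2 * v 2 = (v 0) ^ 3 + v 0 * (v 2) ^ 2)
    (h2 : v 2 ≠ 0) : (v 1 / v 2) ^ 2 = (v 0 / v 2) ^ 3 + (v 0 / v 2) := by
  field_simp
  linear_combination key

lemma mk_scale {v : Fin 3 → ℂ} (hv : v ≠ 0) (h2 : v 2 ≠ 0) :
    Projectivization.mk ℂ v hv
      = Projectivization.mk ℂ ![v 0 / v 2, v 1 / v 2, 1] (ne_xy1 _ _) := by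
  rw [Projectivization.mk_eq_mk_iff']
  refine ⟨v 2, funext fun i => ?_⟩
  fin_cases i <;> simp <;> field_simp

lemma mem_curve' {x y : ℂ} (h : y ^ 2 = x ^ 3 + x) :
    Projectivization.mk ℂ ![x, y, 1] (ne_xy1 x y) ∈ E'curve :=
  ⟨![x, y, 1], ne_xy1 x y, rfl, by simpa using h⟩

lemma not_two' {x y : ℂ} (hy : y ≠ 0) :
    Projectivization.mk ℂ ![x, y, 1] (ne_xy1 x y) ∉ E'two := by
  intro h
  simp only [E'two, Set.mem_insert_iff, Set.mem_singleton_iff] at h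
  rcases h with h | h | h | h
  · obtain ⟨a, ha⟩ := (Projectivization.mk_eq_mk_iff' ℂ _ _ _ _).1 h
    have := congrFun ha 2; simp at this
  · obtain ⟨a, ha⟩ := (Projectivization.mk_eq_mk_iff' ℂ _ _ _ _).1 h
    have := congrFun ha 1; simp at this; exact hy this.symm
  · obtain ⟨a, ha⟩ := (Projectivization.mk_eq_mk_iff' ℂ _ _ _ _).1 h
    have := congrFun ha 1; simp at this; exact hy this.symm
  · obtain ⟨a, ha⟩ := (Projectivization.mk_eq_mk_iff' ℂ _ _ _ _).1 h
    have := congrFun ha 1; simp at this; exact hy this.symm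

def xr (p : P2) : ℂ := p.rep 0 / p.rep 2

lemma xr_mk {v : Fin 3 → ℂ} (hv : v ≠ 0) (h2 : v 2 ≠ 0) :
    xr (Projectivization.mk ℂ v hv) = v 0 / v 2 := by
  obtain ⟨a, ha⟩ := Projectivization.exists_smul_eq_mk_rep ℂ v hv
  unfold xr
  rw [← ha]
  have e0 : (a • v) 0 = (a : ℂ) * v 0 := by simp [Units.smul_def]
  have e2 : (a • v) 2 = (a : ℂ) * v 2 := by simp [Units.smul_def]
  rw [e0, e2]
  exact mul_div_mul_left _ _ a.ne_zero

lemma negYlin_apply0 (v : Fin 3 → ℂ) : negYlin v 0 = v 0 := by simp [negYlin]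
lemma negYlin_apply2 (v : Fin 3 → ℂ) : negYlin v 2 = v 2 := by simp [negYlin]

lemma mem_curve_rep (p : E'openSub) :
    Projectivization.mk ℂ p.1.rep p.1.rep_nonzero ∈ E'curve := by
  rw [Projectivization.mk_rep]; exact p.2.1

lemma not_two_rep (p : E'openSub) :
    Projectivization.mk ℂ p.1.rep p.1.rep_nonzero ∉ E'two := by
  rw [Projectivization.mk_rep]; exact p.2.2

def gmap (p : E'openSub) : {w : ℂ // w ≠ 0 ∧ w ≠ I ∧ w ≠ -I} :=
  ⟨xr p.1, x_spec p.1.rep_nonzero (mem_curve_rep p) (not_two_rep p)⟩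

lemma xr_invP (p : E'openSub) : xr (invP p.1) = xr p.1 := by
  have h2 := (rep_spec p.1.rep_nonzero (mem_curve_rep p) (not_two_rep p)).1
  have hnz : negYlin p.1.rep ≠ 0 := fun h =>
    p.1.rep_nonzero (negYlin_inj (h.trans (map_zero _).symm))
  have hinv : invP p.1 = Projectivization.mk ℂ (negYlin p.1.rep) hnz := by
    conv_lhs => rw [← Projectivization.mk_rep p.1]
    rw [invP, Projectivization.map_mk]
  rw [hinv, xr_mk hnz (by rw [negYlin_apply2]; exact h2),
    negYlin_apply0, negYlin_apply2]
  have : xr p.1 = xr (Projectivization.mk ℂ p.1.rep p.1.rep_nonzero) := by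
    rw [Projectivization.mk_rep]
  rw [this, xr_mk p.1.rep_nonzero h2]

lemma gmap_wd : ∀ a b : E'openSub, baseSetoid.r a b → gmap a = gmap b := by
  intro a b hab
  rcases hab with h | h <;> apply Subtype.ext <;> show xr a.1 = xr b.1
  · rw [h]
  · rw [h, xr_invP]

def Fmap : E'base → {w : ℂ // w ≠ 0 ∧ w ≠ I ∧ w ≠ -I} := Quotient.lift gmap gmap_wd

lemma Fmap_inj : Function.Injective Fmap := by
  intro p q
  induction p using Quotient.ind with | _ a =>
  induction q using Quotient.ind with | _ b =>
  intro h
  apply Quotient.sound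
  have h2a := (rep_spec a.1.rep_nonzero (mem_curve_rep a) (not_two_rep a)).1
  have h2b := (rep_spec b.1.rep_nonzero (mem_curve_rep b) (not_two_rep b)).1
  have keya := eq_of_mem a.1.rep_nonzero (mem_curve_rep a)
  have keyb := eq_of_mem b.1.rep_nonzero (mem_curve_rep b)
  set xa := a.1.rep 0 / a.1.rep 2 with hxa
  set ya := a.1.rep 1 / a.1.rep 2 with hya
  set xb := b.1.rep 0 / b.1.rep 2 with hxb
  set yb := b.1.rep 1 / b.1.rep 2 with hyb
  have hna : a.1 = Projectivization.mk ℂ ![xa, ya, 1] (ne_xy1 _ _) :=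
    (Projectivization.mk_rep a.1).symm.trans (mk_scale a.1.rep_nonzero h2a)
  have hnb : b.1 = Projectivization.mk ℂ ![xb, yb, 1] (ne_xy1 _ _) :=
    (Projectivization.mk_rep b.1).symm.trans (mk_scale b.1.rep_nonzero h2b)
  have hx : xa = xb := congrArg Subtype.val h
  have heqa : ya ^ 2 = xa ^ 3 + xa := y_eq keya h2a
  have heqb : yb ^ 2 = xb ^ 3 + xb := y_eq keyb h2b
  rw [← hx] at heqb
  have hcase : (yb - ya) * (yb + ya) = 0 := by linear_combination heqb - heqa
  rcases mul_eq_zero.1 hcase with hc | hc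
  · left
    have hyy : yb = ya := sub_eq_zero.1 hc
    rw [hna, hnb]
    exact (Projectivization.mk_eq_mk_iff' ℂ _ _ _ _).2
      ⟨1, by rw [one_smul]; funext i; fin_cases i <;> simp [hx, hyy]⟩
  · right
    have hyy : yb = -ya := eq_neg_of_add_eq_zero_left hc
    have hinv : invP a.1 = Projectivization.mk ℂ ![xa, -ya, 1] (ne_xy1 _ _) := by
      rw [hna, invP, Projectivization.map_mk]
      exact (Projectivization.mk_eq_mk_iff' ℂ _ _ _ _).2
        ⟨1, by rw [one_smul]; funext i; fin_cases i <;> simp [negYlin]⟩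
    rw [hnb, hinv]
    exact (Projectivization.mk_eq_mk_iff' ℂ _ _ _ _).2
      ⟨1, by rw [one_smul]; funext i; fin_cases i <;> simp [hx, hyy]⟩

lemma Fmap_surj : Function.Surjective Fmap := by
  rintro ⟨w, hw0, hwI, hwmI⟩
  have hne : w ^ 3 + w ≠ 0 := by
    intro h
    have hfac : w * ((w - I) * (w + I)) = 0 := by
      linear_combination h - w * Complex.I_sq
    rcases mul_eq_zero.1 hfac with h' | h'
    · exact hw0 h'
    rcases mul_eq_zero.1 h' with h' | h'
    · exact hwI (sub_eq_zero.1 h')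
    · exact hwmI (eq_neg_of_add_eq_zero_left h')
  obtain ⟨y, hy⟩ := IsAlgClosed.exists_pow_nat_eq (w ^ 3 + w) (n := 2) two_pos
  have hy0 : y ≠ 0 := fun h => hne (by rw [← hy, h]; ring)
  refine ⟨Quotient.mk baseSetoid
    ⟨Projectivization.mk ℂ ![w, y, 1] (ne_xy1 _ _), mem_curve' hy, not_two' hy0⟩, ?_⟩
  apply Subtype.ext
  show xr (Projectivization.mk ℂ ![w, y, 1] (ne_xy1 _ _)) = w
  rw [xr_mk (ne_xy1 _ _) (by simp : (![w, y, 1] : Fin 3 → ℂ) 2 ≠ 0)]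
  simp

abbrev TT : Type := {v : NZ // pr v ∈ E'curve ∧ pr v ∉ E'two}

def prT (v : TT) : E'openSub := ⟨pr v.1, v.2⟩

lemma prT_surj : Function.Surjective prT := fun p =>
  ⟨⟨⟨p.1.rep, p.1.rep_nonzero⟩, ⟨mem_curve_rep p, not_two_rep p⟩⟩,
    Subtype.ext (Projectivization.mk_rep p.1)⟩

lemma continuous_prT : Continuous prT :=
  (continuous_pr.comp continuous_subtype_val).subtype_mk _

lemma isOpenMap_pr : IsOpenMap pr := by
  intro U hU
  have key : IsOpen (pr ⁻¹' (pr '' U)) := by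
    have heq : pr ⁻¹' (pr '' U)
        = ⋃ c : ℂˣ, (fun v : NZ =>
            (⟨(c : ℂ) • v.1, smul_ne_zero (Units.ne_zero c) v.2⟩ : NZ)) ⁻¹' U := by
      ext v
      simp only [Set.mem_preimage, Set.mem_image, Set.mem_iUnion]
      constructor
      · rintro ⟨u, hu, he⟩
        obtain ⟨a, ha⟩ := (Projectivization.mk_eq_mk_iff ℂ _ _ u.2 v.2).1 he
        refine ⟨a, ?_⟩
        have : (⟨(a : ℂ) • v.1, smul_ne_zero (Units.ne_zero a) v.2⟩ : NZ) = u :=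
          Subtype.ext (by rw [← ha]; simp [Units.smul_def])
        rwa [this]
      · rintro ⟨c, hc⟩
        refine ⟨_, hc, ?_⟩
        show Projectivization.mk ℂ ((c : ℂ) • v.1) _ = Projectivization.mk ℂ v.1 v.2
        exact (Projectivization.mk_eq_mk_iff' ℂ _ _ _ _).2 ⟨(c : ℂ), rfl⟩
    rw [heq]
    exact isOpen_iUnion fun c =>
      hU.preimage ((continuous_subtype_val.const_smul (c : ℂ)).subtype_mk _)
  exact (isQuotientMap_quotient_mk'.isOpen_preimage).1 key

lemma isOpenMap_prT : IsOpenMap prT := by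
  intro U hU
  obtain ⟨B, hB, hBeq⟩ := isOpen_induced_iff.1 hU
  have himg : prT '' U = Subtype.val ⁻¹' (pr '' B) := by
    ext p
    constructor
    · rintro ⟨t, htU, rfl⟩
      rw [← hBeq] at htU
      exact ⟨t.1, htU, rfl⟩
    · rintro ⟨b, hbB, hbe⟩
      refine ⟨⟨b, by rw [hbe]; exact p.2⟩, by rw [← hBeq]; exact hbB, Subtype.ext hbe⟩
  rw [himg]
  exact (isOpenMap_pr B hB).preimage continuous_subtype_val

lemma cont_of_comp {X : Type*} [TopologicalSpace X] (f : E'openSub → X)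
    (hf : Continuous (f ∘ prT)) : Continuous f := by
  rw [continuous_def]
  intro O hO
  have himg : f ⁻¹' O = prT '' (prT ⁻¹' (f ⁻¹' O)) :=
    (Set.image_preimage_eq _ prT_surj).symm
  rw [himg]
  exact isOpenMap_prT _ (hf.isOpen_preimage O hO)

lemma continuous_xrS : Continuous (fun p : E'openSub => xr p.1) := by
  apply cont_of_comp
  have hxy : (fun p : E'openSub => xr p.1) ∘ prT
      = fun v : TT => v.1.1 0 / v.1.1 2 := by
    funext v
    exact xr_mk v.1.2 (rep_spec v.1.2 v.2.1 v.2.2).1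
  rw [hxy]
  exact Continuous.div
    ((continuous_apply 0).comp (continuous_subtype_val.comp continuous_subtype_val))
    ((continuous_apply 2).comp (continuous_subtype_val.comp continuous_subtype_val))
    (fun v => (rep_spec v.1.2 v.2.1 v.2.2).1)

lemma continuous_gmap : Continuous gmap := continuous_xrS.subtype_mk _

lemma continuous_Fmap : Continuous Fmap := continuous_gmap.quotient_lift _

lemma isOpenMap_Fmap : IsOpenMap Fmap := by
  intro U hU
  set Φ := fun t : TT => Fmap (Quotient.mk baseSetoid (prT t)) with hΦdef
  set V := (fun t : TT => Quotient.mk baseSetoid (prT t)) ⁻¹' U with hVdef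
  have himg : Fmap '' U = Φ '' V := by
    ext w
    simp only [Set.mem_image, Set.mem_preimage, hΦdef, hVdef]
    constructor
    · rintro ⟨u, huU, rfl⟩
      obtain ⟨p, rfl⟩ := Quotient.exists_rep u
      obtain ⟨t, rfl⟩ := prT_surj p
      exact ⟨t, huU, rfl⟩
    · rintro ⟨t, htU, rfl⟩
      exact ⟨_, htU, rfl⟩
  have hVopen : IsOpen V :=
    hU.preimage (continuous_quotient_mk'.comp continuous_prT)
  obtain ⟨B, hB, hBeq⟩ := isOpen_induced_iff.1 hVopen
  rw [himg, isOpen_iff_mem_nhds]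
  rintro w ⟨t, htV, rfl⟩
  have h2 := (rep_spec t.1.2 t.2.1 t.2.2).1
  have h1 := (rep_spec t.1.2 t.2.1 t.2.2).2
  have key := eq_of_mem t.1.2 t.2.1
  set u := t.1.1 with hu
  set x₀ := u 0 / u 2 with hx₀def
  set y₀ := u 1 / u 2 with hy₀def
  have hΦt : (Φ t : ℂ) = x₀ := xr_mk t.1.2 h2
  have hy0 : y₀ ≠ 0 := div_ne_zero h1 h2
  have hyx : y₀ ^ 2 = x₀ ^ 3 + x₀ := y_eq key h2
  have hx₀mem := x_spec t.1.2 t.2.1 t.2.2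
  set s := fun z : ℂ => y₀ * Complex.exp (Complex.log ((z ^ 3 + z) / y₀ ^ 2) / 2) with hsdef
  have hx0val : x₀ ^ 3 + x₀ ≠ 0 := by rw [← hyx]; exact pow_ne_zero 2 hy0
  have hone : (x₀ ^ 3 + x₀) / y₀ ^ 2 = 1 := by
    rw [← hyx]; exact div_self (pow_ne_zero 2 hy0)
  have hsx₀ : s x₀ = y₀ := by
    rw [hsdef]; simp only [hone, Complex.log_one, zero_div, Complex.exp_zero, mul_one]
  have hscont : ContinuousAt s x₀ := by
    have hinner : ContinuousAt (fun z : ℂ => (z ^ 3 + z) / y₀ ^ 2) x₀ := by fun_prop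
    have hmem : (x₀ ^ 3 + x₀) / y₀ ^ 2 ∈ Complex.slitPlane := by
      rw [hone]; exact Complex.one_mem_slitPlane
    have hlog : ContinuousAt (fun z : ℂ => Complex.log ((z ^ 3 + z) / y₀ ^ 2)) x₀ :=
      hinner.clog hmem
    exact continuousAt_const.mul
      (Complex.continuous_exp.continuousAt.comp (hlog.div_const 2))
  set σ := fun z : ℂ => (⟨![u 2 * z, u 2 * s z, u 2],
      fun hσ => h2 (by simpa using congrFun hσ 2)⟩ : NZ) with hσdef
  have hσx₀ : σ x₀ = t.1 := by
    apply Subtype.ext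
    show (![u 2 * x₀, u 2 * s x₀, u 2] : Fin 3 → ℂ) = u
    rw [hsx₀]
    funext i
    fin_cases i
    · show u 2 * x₀ = u 0
      rw [hx₀def, mul_comm]; exact div_mul_cancel₀ _ h2
    · show u 2 * y₀ = u 1
      rw [hy₀def, mul_comm]; exact div_mul_cancel₀ _ h2
    · rfl
  have hσcont : ContinuousAt σ x₀ := by
    rw [Topology.IsEmbedding.subtypeVal.toIsInducing.continuousAt_iff]
    apply continuousAt_pi.2
    intro i
    fin_cases i
    · exact (continuousAt_const.mul continuousAt_id :
        ContinuousAt (fun z : ℂ => u 2 * z) x₀)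
    · exact continuousAt_const.mul hscont
    · exact continuousAt_const
  have htB : t.1 ∈ B := by
    rw [← hBeq] at htV; exact htV
  have E1 : ∀ᶠ z in nhds x₀, σ z ∈ B :=
    hσcont.eventually_mem (hB.mem_nhds (hσx₀ ▸ htB))
  have E2 : ∀ᶠ z in nhds x₀, z ^ 3 + z ≠ 0 := by
    have hc : ContinuousAt (fun z : ℂ => z ^ 3 + z) x₀ := by fun_prop
    exact hc.eventually_ne hx0val
  have E3 : ∀ᶠ z in nhds x₀, z ≠ 0 ∧ z ≠ I ∧ z ≠ -I := by
    have hO : IsOpen {z : ℂ | z ≠ 0 ∧ z ≠ I ∧ z ≠ -I} :=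
      isOpen_ne.and (isOpen_ne.and isOpen_ne)
    filter_upwards [hO.mem_nhds hx₀mem] with z hz using hz
  have E := E1.and (E2.and E3)
  have hA : {z : ℂ | σ z ∈ B ∧ (z ^ 3 + z ≠ 0 ∧ (z ≠ 0 ∧ z ≠ I ∧ z ≠ -I))} ∈ nhds x₀ := E
  refine Filter.mem_of_superset
    (continuous_subtype_val.continuousAt.preimage_mem_nhds (by rw [hΦt]; exact hA)) ?_
  rintro ⟨z, hz⟩ hw
  obtain ⟨hzB, hz3, hz0, hzI, hzmI⟩ := hw
  have hr : (z ^ 3 + z) / y₀ ^ 2 ≠ 0 := div_ne_zero hz3 (pow_ne_zero 2 hy0)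
  have hsz2 : s z ^ 2 = z ^ 3 + z := by
    have hexp : Complex.exp (Complex.log ((z ^ 3 + z) / y₀ ^ 2) / 2) ^ 2
        = (z ^ 3 + z) / y₀ ^ 2 := by
      rw [sq, ← Complex.exp_add]
      rw [show Complex.log ((z ^ 3 + z) / y₀ ^ 2) / 2
          + Complex.log ((z ^ 3 + z) / y₀ ^ 2) / 2
          = Complex.log ((z ^ 3 + z) / y₀ ^ 2) by ring]
      exact Complex.exp_log hr
    calc s z ^ 2 = y₀ ^ 2 * Complex.exp (Complex.log ((z ^ 3 + z) / y₀ ^ 2) / 2) ^ 2 := by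
          rw [hsdef]; ring
      _ = y₀ ^ 2 * ((z ^ 3 + z) / y₀ ^ 2) := by rw [hexp]
      _ = z ^ 3 + z := by field_simp
  have hszne : s z ≠ 0 := fun h => hz3 (by rw [← hsz2, h]; ring)
  have hmkeq : pr (σ z) = Projectivization.mk ℂ ![z, s z, 1] (ne_xy1 _ _) := by
    apply (Projectivization.mk_eq_mk_iff' ℂ _ _ _ _).2
    exact ⟨u 2, funext fun i => by fin_cases i <;> simp [hσdef]⟩
  have hcur : pr (σ z) ∈ E'curve := by rw [hmkeq]; exact mem_curve' hsz2
  have hnt : pr (σ z) ∉ E'two := by rw [hmkeq]; exact not_two' hszne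
  refine ⟨⟨σ z, hcur, hnt⟩, ?_, ?_⟩
  · show _ ∈ V
    rw [← hBeq]
    exact hzB
  · apply Subtype.ext
    show xr (pr (σ z)) = z
    have h2' : (![u 2 * z, u 2 * s z, u 2] : Fin 3 → ℂ) 2 ≠ 0 := by simpa using h2
    rw [show pr (σ z) = Projectivization.mk ℂ ![u 2 * z, u 2 * s z, u 2] (σ z).2 from rfl]
    rw [xr_mk (σ z).2 h2']
    show u 2 * z / u 2 = z
    exact mul_div_cancel_left₀ z h2

/-- `(E'(ℂ) ∖ E'[2]) / inv` is homeomorphic to `ℂ ∖ {0, i, −i}`, via a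
homeomorphism induced by the x-coordinate map `[x:y:z] ↦ x/z`. -/
theorem E'base_homeo_complex_minus_three :
    ∃ h : E'base ≃ₜ {w : ℂ // w ≠ 0 ∧ w ≠ I ∧ w ≠ -I},
      ∀ (p : E'openSub) (v : Fin 3 → ℂ) (hv : v ≠ 0),
        Projectivization.mk ℂ v hv = p.1 →
          (h (Quotient.mk baseSetoid p) : ℂ) = v 0 / v 2 := by
  refine ⟨Equiv.toHomeomorphOfContinuousOpen
    (Equiv.ofBijective Fmap ⟨Fmap_inj, Fmap_surj⟩) continuous_Fmap isOpenMap_Fmap, ?_⟩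
  intro p v hv hmk
  have hc : Projectivization.mk ℂ v hv ∈ E'curve := by rw [hmk]; exact p.2.1
  have ht : Projectivization.mk ℂ v hv ∉ E'two := by rw [hmk]; exact p.2.2
  have h2 := (rep_spec hv hc ht).1
  show (Fmap (Quotient.mk baseSetoid p) : ℂ) = v 0 / v 2
  show xr p.1 = v 0 / v 2
  rw [← hmk]
  exact xr_mk hv h2
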